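/- For each agent i, the canonical accessibility relation ∼_i on pairs ⟨Γ,σ⟩ (Γ maximal consistent in SLKVF_m, σ ∈ 2^Q), defined by ⟨Γ,σ⟩ ∼_i ⟨Γ',σ'⟩ iff K_{i,Γ} = K_{i,Γ'} and (σ = σ' or σ = mv_i^Γ(σ')), is an equivalence relation, where K_{i,Γ} = {φ : K_iφ ∈ Γ} and mv_i^Γ(σ)(d) = σ(d) if Kv_i(d) ∈ Γ and 1 − σ(d) otherwise. Moreover, if ⟨Γ,σ⟩ ∼_i ⟨Γ',σ'⟩ then F_i(Γ) = F_i(Γ'), where F_i(Γ) is the function domain defined from the dependency lattice of Γ and i. -/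
import Mathlib


open scoped Classical

/-! Multiagent language with operators `Kv_i`, `Kf_i` and `K_i`. -/

inductive MFormula (P Q A : Type) : Type where
  | top : MFormula P Q A
  | atom : P → MFormula P Q A
  | Kv : A → Q → MFormula P Q A
  | Kf : A → Finset Q → Q → MFormula P Q A
  | and : MFormula P Q A → MFormula P Q A → MFormula P Q A
  | not : MFormula P Q A → MFormula P Q A
  | K : A → MFormula P Q A → MFormula P Q A

namespace MFormula

variable {P Q A : Type}

/-- Material implication. -/
def imp (φ ψ : MFormula P Q A) : MFormula P Q A :=
  MFormula.not (MFormula.and φ (MFormula.not ψ))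

/-- Falsum. -/
def bot : MFormula P Q A := MFormula.not MFormula.top

end MFormula

variable {P Q A G : Type}

/-- Finite conjunction of a list of formulas. -/
def mconj : List (MFormula P Q A) → MFormula P Q A
  | [] => MFormula.top
  | φ :: l => MFormula.and φ (mconj l)

/-- `φ` is a propositional tautology. -/
def IsTautM (φ : MFormula P Q A) : Prop :=
  ∀ v : MFormula P Q A → Bool,
    v MFormula.top = true →
    (∀ α β, v (MFormula.and α β) = (v α && v β)) →
    (∀ α, v (MFormula.not α) = (! v α)) →
    v φ = true

section MAxioms

variable (P Q A : Type) [LinearOrder Q]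

/-- `⋀_{d ∈ D} Kf_i(C,d)`. -/
def mConjKf (i : A) (C D : Finset Q) : MFormula P Q A :=
  mconj ((D.sort (· ≤ ·)).map fun d => MFormula.Kf i C d)

/-- `⋀_{c ∈ C} Kv_i(c)`. -/
def mConjKv (i : A) (C : Finset Q) : MFormula P Q A :=
  mconj ((C.sort (· ≤ ·)).map fun c => MFormula.Kv i c)

/-- The axioms of the multiagent system `SLKVF_m`. -/
inductive SLKVFm : MFormula P Q A → Prop where
  | taut {φ : MFormula P Q A} : IsTautM φ → SLKVFm φ
  | axK (i : A) (φ ψ : MFormula P Q A) :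
      SLKVFm (MFormula.imp (MFormula.K i (MFormula.imp φ ψ))
        (MFormula.imp (MFormula.K i φ) (MFormula.K i ψ)))
  | axT (i : A) (φ : MFormula P Q A) : SLKVFm (MFormula.imp (MFormula.K i φ) φ)
  | ax4 (i : A) (φ : MFormula P Q A) :
      SLKVFm (MFormula.imp (MFormula.K i φ) (MFormula.K i (MFormula.K i φ)))
  | ax5 (i : A) (φ : MFormula P Q A) :
      SLKVFm (MFormula.imp (MFormula.not (MFormula.K i φ))
        (MFormula.K i (MFormula.not (MFormula.K i φ))))
  | kv4 (i : A) (d : Q) :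
      SLKVFm (MFormula.imp (MFormula.Kv i d) (MFormula.K i (MFormula.Kv i d)))
  | kv5 (i : A) (d : Q) :
      SLKVFm (MFormula.imp (MFormula.not (MFormula.Kv i d))
        (MFormula.K i (MFormula.not (MFormula.Kv i d))))
  | kf4 (i : A) (C : Finset Q) (d : Q) :
      SLKVFm (MFormula.imp (MFormula.Kf i C d) (MFormula.K i (MFormula.Kf i C d)))
  | kf5 (i : A) (C : Finset Q) (d : Q) :
      SLKVFm (MFormula.imp (MFormula.not (MFormula.Kf i C d))
        (MFormula.K i (MFormula.not (MFormula.Kf i C d))))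
  | proj (i : A) {C : Finset Q} {c : Q} : c ∈ C → SLKVFm (MFormula.Kf i C c)
  | tran (i : A) (C D : Finset Q) (e : Q) :
      SLKVFm (MFormula.imp (MFormula.and (mConjKf P Q A i C D) (MFormula.Kf i D e))
        (MFormula.Kf i C e))
  | vf (i : A) (C : Finset Q) (d : Q) :
      SLKVFm (MFormula.imp (MFormula.and (mConjKv P Q A i C) (MFormula.Kf i C d))
        (MFormula.Kv i d))

end MAxioms

/-- Provability with modus ponens and necessitation for each agent. -/
inductive ProvM (Ax : MFormula P Q A → Prop) : MFormula P Q A → Prop where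
  | ax {φ : MFormula P Q A} : Ax φ → ProvM Ax φ
  | mp {φ ψ : MFormula P Q A} : ProvM Ax (MFormula.imp φ ψ) → ProvM Ax φ → ProvM Ax ψ
  | nec (i : A) {φ : MFormula P Q A} : ProvM Ax φ → ProvM Ax (MFormula.K i φ)

/-- Consistency: no finite conjunction of members proves `⊥`. -/
def ConsistentM (Ax : MFormula P Q A → Prop) (Γ : Set (MFormula P Q A)) : Prop :=
  ¬ ∃ L : List (MFormula P Q A),
      (∀ φ ∈ L, φ ∈ Γ) ∧ ProvM Ax (MFormula.imp (mconj L) MFormula.bot)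

/-- Maximal consistency. -/
def MCSM (Ax : MFormula P Q A → Prop) (Γ : Set (MFormula P Q A)) : Prop :=
  ConsistentM Ax Γ ∧ ∀ φ : MFormula P Q A, φ ∈ Γ ∨ MFormula.not φ ∈ Γ

/-- A function domain on `G`. -/
abbrev FnDom (G : Type) : Type := Set (Σ n : ℕ, (Fin n → G) → G)

/-- `F` contains all projection functions. -/
def hasProjections (F : FnDom G) : Prop :=
  ∀ (j : ℕ) (k : Fin j), (⟨j, fun x => x k⟩ : Σ n : ℕ, (Fin n → G) → G) ∈ F

/-- `F` is closed under function composition. -/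
def closedComp (F : FnDom G) : Prop :=
  ∀ (n m : ℕ), 0 < n → ∀ f : (Fin n → G) → G,
    (⟨n, f⟩ : Σ n : ℕ, (Fin n → G) → G) ∈ F →
    ∀ g : Fin n → (Fin m → G) → G,
      (∀ k, (⟨m, g k⟩ : Σ n : ℕ, (Fin n → G) → G) ∈ F) →
      (⟨m, fun x => f fun k => g k x⟩ : Σ n : ℕ, (Fin n → G) → G) ∈ F

/-- The tuple of values of the variables of `C`, in increasing order. -/
def tupleV [LinearOrder Q] (v : Q → G) (C : Finset Q) : Fin C.card → G :=
  fun k => v ((C.sort (· ≤ ·)).get (Fin.cast (Finset.length_sort (s := C) (· ≤ ·)).symm k))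

/-- The closure operator `cl_i^Γ`, extended to arbitrary sets of variables as the
union of its values on finite subsets. -/
def clOp (Γ : Set (MFormula P Q A)) (i : A) (S : Set Q) : Set Q :=
  {d : Q | ∃ C : Finset Q, ↑C ⊆ S ∧ MFormula.Kf i C d ∈ Γ}

/-- `hs⟨c,n⟩ = cl_i^Γ({c})`, forgetting the second coordinate. -/
def hsOp (Γ : Set (MFormula P Q A)) (i : A) : Q × Bool → Set Q :=
  fun x => clOp Γ i {x.1}

/-- The function domain `F_i(Γ)` determined by the dependency lattice of `Γ` and
`i`: all finitary `f` on `G = Q × {0,1}` with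
`hs(f(x₁,…,xₙ)) ≤ ⋁{hs(x₁),…,hs(xₙ)}` (the join of closed sets being the closure
of their union, and the empty join being `cl(∅)`). -/
def FiG (Γ : Set (MFormula P Q A)) (i : A) : FnDom (Q × Bool) :=
  {p : Σ n : ℕ, (Fin n → Q × Bool) → Q × Bool |
    ∀ x : Fin p.1 → Q × Bool,
      hsOp Γ i (p.2 x) ⊆ clOp Γ i (⋃ k : Fin p.1, hsOp Γ i (x k))}

/-! STATEMENT 18: the canonical relation `∼_i` on pairs `⟨Γ,σ⟩` is an equivalence
relation, and related worlds determine the same function domain `F_i(Γ)`. -/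

/-- `K_{i,Γ} = {φ : K_iφ ∈ Γ}`. -/
def KiSet {P Q A : Type} (Γ : Set (MFormula P Q A)) (i : A) : Set (MFormula P Q A) :=
  {φ : MFormula P Q A | MFormula.K i φ ∈ Γ}

/-- The value move operator: `mv_i^Γ(σ)(d) = σ(d)` if `Kv_i(d) ∈ Γ`, and
`1 − σ(d)` otherwise. -/
noncomputable def mvOp {P Q A : Type} (Γ : Set (MFormula P Q A)) (i : A)
    (σ : Q → Bool) : Q → Bool :=
  fun d => if MFormula.Kv i d ∈ Γ then σ d else ! σ d

/-- The canonical worlds: pairs of a maximal consistent set and an assignment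
`σ ∈ 2^Q`. -/
abbrev CanonW (P Q A : Type) [LinearOrder Q] : Type :=
  {Γ : Set (MFormula P Q A) // MCSM (SLKVFm P Q A) Γ} × (Q → Bool)

/-- The canonical relation: `⟨Γ,σ⟩ ∼_i ⟨Γ',σ'⟩` iff `K_{i,Γ} = K_{i,Γ'}` and
(`σ = σ'` or `σ = mv_i^Γ(σ')`). -/
noncomputable def relW {P Q A : Type} [LinearOrder Q] (i : A) :
    CanonW P Q A → CanonW P Q A → Prop :=
  fun w w' => KiSet w.1.1 i = KiSet w'.1.1 i ∧
    (w.2 = w'.2 ∨ w.2 = mvOp w.1.1 i w'.2)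


namespace Proof18

variable {P Q A : Type} [LinearOrder Q]

lemma taut_key (φ ψ : MFormula P Q A) :
    IsTautM (MFormula.imp (MFormula.imp φ ψ)
      (MFormula.imp (mconj [φ, MFormula.not ψ]) MFormula.bot)) := by
  intro v hT hA hN
  simp only [MFormula.imp, MFormula.bot, mconj, hA, hN, hT]
  cases v φ <;> cases v ψ <;> simp

lemma mcs_closed {Γ : Set (MFormula P Q A)} (h : MCSM (SLKVFm P Q A) Γ)
    {φ ψ : MFormula P Q A} (hφ : φ ∈ Γ)
    (hp : ProvM (SLKVFm P Q A) (MFormula.imp φ ψ)) : ψ ∈ Γ := by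
  rcases h.2 ψ with hψ | hψ
  · exact hψ
  · exfalso
    apply h.1
    refine ⟨[φ, MFormula.not ψ], ?_, ?_⟩
    · intro χ hχ
      simp only [List.mem_cons, List.not_mem_nil, or_false] at hχ
      rcases hχ with rfl | rfl <;> assumption
    · exact ProvM.mp (ProvM.ax (SLKVFm.taut (taut_key φ ψ))) hp

lemma mem_iff_K {Γ : Set (MFormula P Q A)} (h : MCSM (SLKVFm P Q A) Γ)
    {φ : MFormula P Q A} {i : A}
    (h4 : ProvM (SLKVFm P Q A) (MFormula.imp φ (MFormula.K i φ))) :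
    φ ∈ Γ ↔ MFormula.K i φ ∈ Γ :=
  ⟨fun hm => mcs_closed h hm h4,
   fun hm => mcs_closed h hm (ProvM.ax (SLKVFm.axT i φ))⟩

lemma Kv_iff {Γ Γ' : Set (MFormula P Q A)} (h : MCSM (SLKVFm P Q A) Γ)
    (h' : MCSM (SLKVFm P Q A) Γ') {i : A} (hK : KiSet Γ i = KiSet Γ' i)
    (d : Q) : MFormula.Kv i d ∈ Γ ↔ MFormula.Kv i d ∈ Γ' := by
  rw [mem_iff_K h (ProvM.ax (SLKVFm.kv4 i d)),
    mem_iff_K h' (ProvM.ax (SLKVFm.kv4 i d))]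
  exact Set.ext_iff.mp hK (MFormula.Kv i d)

lemma Kf_iff {Γ Γ' : Set (MFormula P Q A)} (h : MCSM (SLKVFm P Q A) Γ)
    (h' : MCSM (SLKVFm P Q A) Γ') {i : A} (hK : KiSet Γ i = KiSet Γ' i)
    (C : Finset Q) (d : Q) : MFormula.Kf i C d ∈ Γ ↔ MFormula.Kf i C d ∈ Γ' := by
  rw [mem_iff_K h (ProvM.ax (SLKVFm.kf4 i C d)),
    mem_iff_K h' (ProvM.ax (SLKVFm.kf4 i C d))]
  exact Set.ext_iff.mp hK (MFormula.Kf i C d)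

lemma mvOp_congr {Γ Γ' : Set (MFormula P Q A)} (h : MCSM (SLKVFm P Q A) Γ)
    (h' : MCSM (SLKVFm P Q A) Γ') {i : A} (hK : KiSet Γ i = KiSet Γ' i) :
    mvOp Γ i = mvOp Γ' i := by
  funext σ d
  unfold mvOp
  rw [if_congr (Kv_iff h h' hK d) rfl rfl]

lemma mv_invol {Γ : Set (MFormula P Q A)} {i : A} (σ : Q → Bool) :
    mvOp Γ i (mvOp Γ i σ) = σ := by
  funext d
  unfold mvOp
  by_cases hd : MFormula.Kv i d ∈ Γ <;> simp [hd]

lemma clOp_congr {Γ Γ' : Set (MFormula P Q A)} (h : MCSM (SLKVFm P Q A) Γ)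
    (h' : MCSM (SLKVFm P Q A) Γ') {i : A} (hK : KiSet Γ i = KiSet Γ' i) :
    clOp Γ i = clOp Γ' i := by
  funext S
  ext d
  simp only [clOp, Set.mem_setOf_eq]
  constructor <;> rintro ⟨C, hC, hmem⟩ <;>
    first
    | exact ⟨C, hC, (Kf_iff h h' hK C d).mp hmem⟩
    | exact ⟨C, hC, (Kf_iff h h' hK C d).mpr hmem⟩

end Proof18

theorem statement18 (P Q A : Type) [Countable P] [Infinite P] [LinearOrder Q]
    (i : A) :
    Equivalence (relW (P := P) (Q := Q) (A := A) i) ∧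
    ∀ w w' : CanonW P Q A, relW i w w' → FiG w.1.1 i = FiG w'.1.1 i := by
  constructor
  · constructor
    · intro w; exact ⟨rfl, Or.inl rfl⟩
    · rintro w w' ⟨hK, hσ⟩
      refine ⟨hK.symm, ?_⟩
      have hmv : mvOp w.1.1 i = mvOp w'.1.1 i :=
        Proof18.mvOp_congr w.1.2 w'.1.2 hK
      rcases hσ with h | h
      · exact Or.inl h.symm
      · right; rw [← hmv, h, Proof18.mv_invol]
    · rintro w w' w'' ⟨hK, hσ⟩ ⟨hK', hσ'⟩
      refine ⟨hK.trans hK', ?_⟩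
      have hmv : mvOp w.1.1 i = mvOp w'.1.1 i :=
        Proof18.mvOp_congr w.1.2 w'.1.2 hK
      rcases hσ with h | h <;> rcases hσ' with h' | h'
      · exact Or.inl (h.trans h')
      · right; rw [h, h', ← hmv]
      · right; rw [h, h']
      · left; rw [h, h', ← hmv, Proof18.mv_invol]
  · rintro w w' ⟨hK, -⟩
    have hcl : clOp w.1.1 i = clOp w'.1.1 i :=
      Proof18.clOp_congr w.1.2 w'.1.2 hK
    simp only [FiG, hsOp, hcl]
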